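/- Let n = 2m and K_n have probability mass function p(r) = 2^{-(2m-r)}·C(2m-r, m) for r ∈ {0,...,m}. A random variable X with support {0,...,m} has this distribution if and only if for every function g : ℤ → ℝ with g(-1) = 0 one has E[(2m - X + 1)(g(X) - g(X-1)) - (X+1)g(X)] = 0. -/

import Mathlib

open MeasureTheory

/-- The pmf of the number of returns to the origin of simple random walk up to time `2m`:
`p r = 2^{-(2m-r)} * C(2m-r, m)`. -/
noncomputable def returnsPMF (m r : ℕ) : ℝ := (Nat.choose (2*m - r) m : ℝ) / 2^(2*m - r)

/-!
Summing by parts (with `g (-1) = 0`), `E[(2m - X + 1)(g X - g (X-1)) - (X+1) g X]` equals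
`∑_{j<m} g j * (2(m-j) q j - (2m-j) q (j+1))` where `q r = P(X = r)`. So the Stein identity for
all `g` says exactly that `q` satisfies the first-order recursion `(2m-j) q (j+1) = 2(m-j) q j`
for `j < m`. The pmf `C(2m-r, m) / 2^(2m-r)` satisfies it, and the recursion determines a
probability vector on `{0, …, m}`; the pmf sums to one because
`∑_{k≤n} C(n+k, k) / 2^k = 2^n`.
-/

open Finset

theorem Nat.choose_two_mul_add_two (n : ℕ) :
    (2 * n + 2).choose (n + 1) = 2 * (2 * n + 1).choose (n + 1) := by
  rw [Nat.choose_succ_succ', Nat.choose_symm_half]; ring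

theorem sum_range_choose_add_div_two_pow (n : ℕ) :
    ∑ k ∈ range (n + 1), ((n + k).choose k : ℝ) / 2 ^ k = 2 ^ n := by
  induction n with
  | zero => simp
  | succ n ih =>
    -- Pascal's rule gives `S (n+1) = S (n+1) / 2 + S n`, where `S n` is the sum on the left:
    -- the boundary terms cancel because `C(2n+2, n+1) = 2 C(2n+1, n+1)`.
    have hlast : ∑ k ∈ range (n + 2), ((n + 1 + k).choose k : ℝ) / 2 ^ k
        = ∑ k ∈ range (n + 1), ((n + 1 + k).choose k : ℝ) / 2 ^ k
          + 2 * ((2 * n + 1).choose (n + 1) : ℝ) / 2 ^ (n + 1) := by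
      rw [sum_range_succ _ (n + 1), show n + 1 + (n + 1) = 2 * n + 2 by ring,
        Nat.choose_two_mul_add_two]
      push_cast; ring
    have hprev : 2 ^ n + ((2 * n + 1).choose (n + 1) : ℝ) / 2 ^ (n + 1)
        = ∑ k ∈ range (n + 1), ((n + 1 + k).choose (k + 1) : ℝ) / 2 ^ (k + 1) + 1 := by
      rw [← ih, show 2 * n + 1 = n + (n + 1) by ring,
        ← sum_range_succ (fun k => ((n + k).choose k : ℝ) / 2 ^ k), sum_range_succ']
      congr 1
      · exact sum_congr rfl fun k _ => by rw [show n + (k + 1) = n + 1 + k by omega]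
      · simp
    have hpascal : ∑ k ∈ range (n + 2), ((n + 1 + k).choose k : ℝ) / 2 ^ k
        = ∑ k ∈ range (n + 1), ((n + 1 + k).choose k : ℝ) / 2 ^ (k + 1)
          + (∑ k ∈ range (n + 1), ((n + 1 + k).choose (k + 1) : ℝ) / 2 ^ (k + 1) + 1) := by
      rw [sum_range_succ' _ (n + 1), ← add_assoc, ← sum_add_distrib]
      congr 1
      · exact sum_congr rfl fun k _ => by
          rw [← add_assoc (n + 1) k 1, Nat.choose_succ_succ', Nat.cast_add, add_div]
      · simp
    have hhalf : ∑ k ∈ range (n + 1), ((n + 1 + k).choose k : ℝ) / 2 ^ (k + 1)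
        = (∑ k ∈ range (n + 1), ((n + 1 + k).choose k : ℝ) / 2 ^ k) / 2 := by
      rw [sum_div]; simp [pow_succ, div_div]
    rw [← hprev, hhalf] at hpascal
    rw [pow_succ]
    linear_combination 2 * hpascal - hlast

theorem sum_range_returnsPMF (m : ℕ) : ∑ r ∈ range (m + 1), returnsPMF m r = 1 := by
  rw [← sum_range_reflect]
  calc ∑ k ∈ range (m + 1), returnsPMF m (m + 1 - 1 - k)
      = ∑ k ∈ range (m + 1), ((m + k).choose k : ℝ) / 2 ^ k / 2 ^ m := by
        refine sum_congr rfl fun k hk => ?_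
        rw [returnsPMF, show 2 * m - (m + 1 - 1 - k) = m + k by grind, Nat.choose_symm_add,
          pow_add, div_div, mul_comm]
    _ = 1 := by rw [← sum_div, sum_range_choose_add_div_two_pow, div_self (by positivity)]

theorem returnsPMF_succ {m r : ℕ} (hr : r < m) :
    (2 * m - r : ℝ) * returnsPMF m (r + 1) = 2 * (m - r) * returnsPMF m r := by
  obtain ⟨n, hn'⟩ : ∃ n, 2 * m - r = n + 1 := ⟨2 * m - r - 1, by omega⟩
  have hn : 2 * m - (r + 1) = n := by omega
  have hchoose := Nat.choose_mul_succ_eq n m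
  rw [show n + 1 - m = m - r by omega] at hchoose
  have hcast : (2 * m - r : ℝ) = n + 1 := by
    rw [← Nat.cast_ofNat, ← Nat.cast_mul, ← Nat.cast_sub (by omega), hn']; push_cast; ring
  rw [returnsPMF, returnsPMF, hn, hn', hcast, pow_succ]
  have := congrArg (Nat.cast (R := ℝ)) hchoose
  push_cast [Nat.cast_sub hr.le] at this
  field_simp
  linear_combination this

theorem integral_eq_sum_of_measure_compl_eq_zero {X E : Type*} [MeasurableSpace X]
    [MeasurableSingletonClass X] [NormedAddCommGroup E] [NormedSpace ℝ E] [CompleteSpace E]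
    {μ : Measure X} [IsFiniteMeasure μ] {s : Finset X} (hs : μ (↑s)ᶜ = 0) (f : X → E) :
    ∫ x, f x ∂μ = ∑ x ∈ s, μ.real {x} • f x := by
  rw [← setIntegral_finset s IntegrableOn.finset,
    Measure.restrict_eq_self_of_ae_mem (ae_iff.2 hs)]

theorem integral_eq_sum_range_of_support {m : ℕ} {ν : Measure ℤ} [IsFiniteMeasure ν]
    (hsupp : ∀ k : ℤ, ν {k} ≠ 0 → k ∈ Set.Icc 0 (m : ℤ)) (f : ℤ → ℝ) :
    ∫ k, f k ∂ν = ∑ r ∈ range (m + 1), (ν {(r : ℤ)}).toReal * f r := by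
  have hs : ν (((range (m + 1)).map Nat.castEmbedding : Finset ℤ) : Set ℤ)ᶜ = 0 := by
    refine (measure_null_iff_singleton (Set.to_countable _)).2 fun k hk => ?_
    by_contra hk0
    obtain ⟨h0, hkm⟩ := hsupp k hk0
    exact hk (mem_map.2 ⟨k.toNat, mem_range.2 (by omega), by simp [h0]⟩)
  rw [integral_eq_sum_of_measure_compl_eq_zero hs, sum_map]
  rfl

noncomputable def returnsSteinOperator (m : ℕ) (g : ℤ → ℝ) (k : ℤ) : ℝ :=
  (2 * (m : ℝ) - k + 1) * (g k - g (k - 1)) - ((k : ℝ) + 1) * g k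

theorem sum_range_mul_returnsSteinOperator (m : ℕ) (q : ℕ → ℝ) {g : ℤ → ℝ} (hg : g (-1) = 0) :
    ∑ r ∈ range (m + 1), q r * returnsSteinOperator m g r
      = ∑ j ∈ range m, g j * (2 * (m - j) * q j - (2 * m - j) * q (j + 1)) := by
  have hsplit : ∀ r : ℕ, q r * returnsSteinOperator m g r
      = 2 * (m - r) * q r * g r - (2 * m - r + 1) * q r * g (r - 1) := by
    intro r; simp only [returnsSteinOperator, Int.cast_natCast]; ring
  rw [sum_congr rfl fun r _ => hsplit r, sum_sub_distrib, sum_range_succ,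
    sum_range_succ' (fun r : ℕ => (2 * m - r + 1) * q r * g (r - 1))]
  simp only [sub_self, mul_zero, zero_mul, add_zero, Nat.cast_add, Nat.cast_one,
    add_sub_cancel_right, CharP.cast_eq_zero, sub_zero, zero_sub, Int.reduceNeg, hg,
    ← sum_sub_distrib]
  exact sum_congr rfl fun j _ => by ring

theorem eq_of_recurrence_of_sum_eq_one {m : ℕ} {a b p q : ℕ → ℝ} (hb : ∀ j < m, b j ≠ 0)
    (hp : ∀ j < m, b j * p (j + 1) = a j * p j) (hq : ∀ j < m, b j * q (j + 1) = a j * q j)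
    (hp0 : p 0 ≠ 0) (hp1 : ∑ r ∈ range (m + 1), p r = 1) (hq1 : ∑ r ∈ range (m + 1), q r = 1) :
    ∀ r ≤ m, q r = p r := by
  have hprop : ∀ r ≤ m, q r * p 0 = q 0 * p r := by
    intro r hr
    induction r with
    | zero => ring
    | succ r ih =>
      refine mul_left_cancel₀ (hb r hr) ?_
      linear_combination p 0 * hq r hr - q 0 * hp r hr + a r * ih (by omega)
  have hq0 : q 0 = p 0 := by
    have := sum_congr rfl fun r hr => hprop r (Nat.lt_succ_iff.1 (mem_range.1 hr))
    rwa [← sum_mul, ← mul_sum, hq1, hp1, one_mul, mul_one, eq_comm] at this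
  intro r hr
  refine mul_right_cancel₀ hp0 ?_
  rw [hprop r hr, hq0, mul_comm]

theorem stmt15_general (m : ℕ) (ν : Measure ℤ) [IsProbabilityMeasure ν]
    (hsupp : ∀ k : ℤ, ν {k} ≠ 0 ↔ k ∈ Set.Icc (0:ℤ) (m:ℤ)) :
    (∀ r : ℕ, r ≤ m → (ν {(r:ℤ)}).toReal = returnsPMF m r) ↔
      ∀ g : ℤ → ℝ, g (-1) = 0 →
        ∫ k, ((2*(m:ℝ) - (k:ℝ) + 1) * (g k - g (k-1)) - ((k:ℝ) + 1) * g k) ∂ν = 0 := by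
  set q : ℕ → ℝ := fun r => (ν {(r : ℤ)}).toReal
  have hintegral := integral_eq_sum_range_of_support (fun k => (hsupp k).1)
  have hstein : ∀ g : ℤ → ℝ, g (-1) = 0 →
      ∫ k, returnsSteinOperator m g k ∂ν
        = ∑ j ∈ range m, g j * (2 * (m - j) * q j - (2 * m - j) * q (j + 1)) := fun g hg => by
    rw [hintegral, sum_range_mul_returnsSteinOperator m q hg]
  refine ⟨fun hq g hg => (hstein g hg).trans (sum_eq_zero fun j hj => ?_), fun h => ?_⟩
  · have hj := mem_range.1 hj
    simp only [q, hq j hj.le, hq (j + 1) hj, returnsPMF_succ hj, sub_self, mul_zero]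
  · have hrec : ∀ j < m, (2 * m - j) * q (j + 1) = 2 * (m - j) * q j := by
      intro j hj
      -- test against the indicator of `j`
      have := (hstein (fun k => if k = j then 1 else 0) (by simp)).symm.trans (h _ (by simp))
      simp [hj] at this
      linarith
    have hq1 : ∑ r ∈ range (m + 1), q r = 1 := by simpa using (hintegral fun _ => 1).symm
    refine eq_of_recurrence_of_sum_eq_one (fun j hj => ?_) (fun j hj => returnsPMF_succ hj) hrec
      ?_ (sum_range_returnsPMF m) hq1
    · have : (j : ℝ) < m := by exact_mod_cast hj
      linarith
    · exact div_ne_zero (by exact_mod_cast (Nat.choose_pos (by omega)).ne') (by positivity)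

theorem stmt15 (m : ℕ) (hm : 0 < m) (ν : Measure ℤ) [IsProbabilityMeasure ν]
    (hsupp : ∀ k : ℤ, ν {k} ≠ 0 ↔ k ∈ Set.Icc (0:ℤ) (m:ℤ)) :
    (∀ r : ℕ, r ≤ m → (ν {(r:ℤ)}).toReal = returnsPMF m r) ↔
      ∀ g : ℤ → ℝ, g (-1) = 0 →
        ∫ k, ((2*(m:ℝ) - (k:ℝ) + 1) * (g k - g (k-1)) - ((k:ℝ) + 1) * g k) ∂ν = 0 :=
  stmt15_general m ν hsupp
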